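/- Soundness of the spider fusion rule: for all natural numbers n, m, k with k ≥ 1 and all α, β ∈ ℝ, S(k, m, α) · S(n, k, β) = S(n, m, α + β), where for natural numbers a, b and phase γ, S(a, b, γ) is the matrix indexed by (Fin b → Fin 2) × (Fin a → Fin 2) whose (y, x) entry is 1 if all components of y and x equal 0, e^{iγ} if all components equal 1, and 0 otherwise (i.e. S(a, b, γ) = |0⟩^{⊗b}⟨0|^{⊗a} + e^{iγ}|1⟩^{⊗b}⟨1|^{⊗a}). -/

import Mathlib

open Complex Real

noncomputable section

/-- The matrix interpretation of the green spider with `a` inputs, `b`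
outputs and phase `γ`: `S(a,b,γ) = |0⟩^{⊗b}⟨0|^{⊗a} + e^{iγ}|1⟩^{⊗b}⟨1|^{⊗a}`,
i.e. the `(y,x)` entry is `1` if all components of `y` and `x` are `0`,
`e^{iγ}` if all components are `1`, and `0` otherwise. -/
def spider (a b : ℕ) (γ : ℝ) : Matrix (Fin b → Fin 2) (Fin a → Fin 2) ℂ :=
  Matrix.of fun y x =>
    (if (∀ i, y i = 0) ∧ (∀ i, x i = 0) then 1 else 0)
      + (if (∀ i, y i = 1) ∧ (∀ i, x i = 1) then Complex.exp (γ * Complex.I) else 0)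

theorem spider_eq_single_add_single (a b : ℕ) (γ : ℝ) :
    spider a b γ = Matrix.single 0 0 1 + Matrix.single 1 1 (exp (γ * I)) := by
  ext y x
  simp [spider, Matrix.single_apply, funext_iff, eq_comm]

/-- Soundness of the spider fusion rule: two green spiders connected by
`k ≥ 1` edges fuse into one green spider whose phase is the sum of the phases. -/
theorem spider_fusion (n m k : ℕ) (hk : 1 ≤ k) (α β : ℝ) :
    spider k m α * spider n k β = spider n m (α + β) := by
  -- With `k = 0` the all-zeros and all-ones inner states coincide and the cross terms survive.
  have hne : (0 : Fin k → Fin 2) ≠ 1 := fun h => zero_ne_one (congrFun h ⟨0, hk⟩)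
  simp [spider_eq_single_add_single, Matrix.add_mul, Matrix.mul_add, hne, hne.symm, add_mul,
    Complex.exp_add]

end
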